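/- Let m(5,q) denote the minimum length of a minimal linear code of dimension 5 over F_q. If there exists a higgledy-piggledy set of six lines in PG(4,q), two of which intersect, then m(5,q) ≤ 6q+5. -/

import Mathlib

open Module

namespace HP

variable (F : Type*) [Field F] (V : Type*) [AddCommGroup V] [Module F V]

/-- The set of points of the projective space `PG(V)` lying in a linear subspace `W`.
A projective point lies in `W` iff its representing one-dimensional subspace is below `W`. -/
def ptsIn (W : Submodule F V) : Set (Projectivization F V) := {P | P.submodule ≤ W}

/-- The linear span of a set of projective points. -/
noncomputable def spanPts (S : Set (Projectivization F V)) : Submodule F V :=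
  ⨆ P ∈ S, P.submodule

/-- `S` is a strong `k`-blocking set of an ambient projective space of projective
dimension `N`: every `(N-k)`-dimensional projective subspace `W` (i.e. linear subspace of
rank `N-k+1`) is spanned by its intersection with `S`. -/
def StrongBlock (N k : ℕ) (S : Set (Projectivization F V)) : Prop :=
  ∀ W : Submodule F V, finrank F W = N - k + 1 →
    spanPts F V (S ∩ ptsIn F V W) = W

end HP

open HP

/-- A linear code (subspace of `F^n`) is minimal if the support of any nonzero codeword
contains the support of another codeword only when the latter is a scalar multiple. -/
def IsMinimalCode {F : Type*} [Field F] {n : ℕ} (C : Submodule F (Fin n → F)) : Prop :=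
  ∀ c ∈ C, c ≠ 0 → ∀ c' ∈ C, c' ≠ 0 →
    {i | c' i ≠ 0} ⊆ {i | c i ≠ 0} → ∃ a : F, c' = a • c

/-! Let `S` be the set of points on the six lines. Evaluating the linear forms of `F⁵` at
representatives of the points of `S` gives a code of length `|S|`, minimal because `S` is a
strong blocking set: if the support of the codeword of `f'` lies in that of `f`, then `f'`
vanishes at every point of `S` on the hyperplane `ker f`; these points span `ker f`, so
`ker f ≤ ker f'` and `f'` is a multiple of `f`. Since two of the lines share a point,
`|S| ≤ 6 (q + 1) - 1`. -/

lemma Set.Finite.ncard_biUnion_le_mul {ι α : Type*} {t : Set ι} (ht : t.Finite) {s : ι → Set α}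
    {m : ℕ} (hs : ∀ i ∈ t, (s i).ncard ≤ m) : (⋃ i ∈ t, s i).ncard ≤ t.ncard * m := by
  calc (⋃ i ∈ t, s i).ncard ≤ ∑ i ∈ ht.toFinset, (s i).ncard := by
        simpa using ht.toFinset.set_ncard_biUnion_le s
    _ ≤ ht.toFinset.card * m := Finset.sum_le_card_nsmul _ _ _ (by simpa using hs)
    _ = t.ncard * m := by rw [Set.ncard_eq_toFinset_card t ht]

section Points

variable {F V : Type*} [Field F] [AddCommGroup V] [Module F V]

lemma HP.mk_mem_ptsIn_iff {W : Submodule F V} {v : V} (hv : v ≠ 0) :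
    Projectivization.mk F v hv ∈ ptsIn F V W ↔ v ∈ W := by
  simp [ptsIn, Projectivization.submodule_mk, Submodule.span_singleton_le_iff_mem]

lemma HP.ptsIn_eq_range_map (W : Submodule F V) :
    ptsIn F V W = Set.range (Projectivization.map W.subtype W.injective_subtype) := by
  ext P
  induction P using Projectivization.ind with
  | h v hv =>
    rw [mk_mem_ptsIn_iff]
    constructor
    · intro hvW
      exact ⟨Projectivization.mk F ⟨v, hvW⟩ (by simpa using hv), Projectivization.map_mk _ _ _ _⟩
    · rintro ⟨Q, hQ⟩
      induction Q using Projectivization.ind with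
      | h w hw =>
        rw [Projectivization.map_mk, eq_comm, Projectivization.mk_eq_mk_iff] at hQ
        obtain ⟨a, rfl⟩ := hQ
        exact W.smul_of_tower_mem a w.2

lemma HP.ncard_ptsIn_of_finrank_eq_two [Finite F] {ℓ : Submodule F V} (hℓ : finrank F ℓ = 2) :
    (ptsIn F V ℓ).ncard = Nat.card F + 1 := by
  rw [ptsIn_eq_range_map, Set.ncard_range_of_injective (Projectivization.map_injective _ _),
    Projectivization.card_of_finrank_two F ℓ hℓ]

lemma HP.finite_ptsIn_of_finrank_eq_two [Finite F] {ℓ : Submodule F V} (hℓ : finrank F ℓ = 2) :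
    (ptsIn F V ℓ).Finite :=
  Set.finite_of_ncard_ne_zero (by rw [ncard_ptsIn_of_finrank_eq_two hℓ]; omega)

lemma HP.ncard_biUnion_ptsIn_add_one_le [Finite F] {L : Set (Submodule F V)} (hL : L.Finite)
    (hdim : ∀ ℓ ∈ L, finrank F ℓ = 2) {ℓ₁ ℓ₂ : Submodule F V} (h₁ : ℓ₁ ∈ L) (h₂ : ℓ₂ ∈ L)
    (hne : ℓ₁ ≠ ℓ₂) (hmeet : ℓ₁ ⊓ ℓ₂ ≠ ⊥) :
    (⋃ ℓ ∈ L, ptsIn F V ℓ).ncard + 1 ≤ L.ncard * (Nat.card F + 1) := by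
  obtain ⟨v, ⟨hv₁, hv₂⟩, hv⟩ := Submodule.exists_mem_ne_zero_of_ne_bot hmeet
  set P₀ := Projectivization.mk F v hv
  have hcover : ⋃ ℓ ∈ L, ptsIn F V ℓ ⊆
      (⋃ ℓ ∈ L \ {ℓ₂}, ptsIn F V ℓ) ∪ (ptsIn F V ℓ₂ \ {P₀}) := by
    simp only [Set.subset_def, Set.mem_iUnion₂, Set.mem_union, Set.mem_sdiff,
      Set.mem_singleton_iff]
    rintro P ⟨ℓ, hℓ, hP⟩
    by_cases hℓ₂ : ℓ = ℓ₂
    · subst hℓ₂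
      by_cases hP₀ : P = P₀
      · exact Or.inl ⟨ℓ₁, ⟨h₁, hne⟩, hP₀ ▸ (mk_mem_ptsIn_iff hv).2 hv₁⟩
      · exact Or.inr ⟨hP, hP₀⟩
    · exact Or.inl ⟨ℓ, ⟨hℓ, hℓ₂⟩, hP⟩
  have hrest : (⋃ ℓ ∈ L \ {ℓ₂}, ptsIn F V ℓ).ncard ≤ (L \ {ℓ₂}).ncard * (Nat.card F + 1) :=
    hL.sdiff.ncard_biUnion_le_mul fun ℓ hℓ => (ncard_ptsIn_of_finrank_eq_two (hdim ℓ hℓ.1)).le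
  have hℓ₂ : (ptsIn F V ℓ₂ \ {P₀}).ncard + 1 = Nat.card F + 1 := by
    rw [← ncard_ptsIn_of_finrank_eq_two (hdim ℓ₂ h₂)]
    exact Set.ncard_sdiff_singleton_add_one ((mk_mem_ptsIn_iff hv).2 hv₂)
      (finite_ptsIn_of_finrank_eq_two (hdim ℓ₂ h₂))
  calc (⋃ ℓ ∈ L, ptsIn F V ℓ).ncard + 1
      ≤ ((⋃ ℓ ∈ L \ {ℓ₂}, ptsIn F V ℓ) ∪ (ptsIn F V ℓ₂ \ {P₀})).ncard + 1 := by
        gcongr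
        exact (hL.sdiff.biUnion fun ℓ hℓ => finite_ptsIn_of_finrank_eq_two (hdim ℓ hℓ.1)).union
          (finite_ptsIn_of_finrank_eq_two (hdim ℓ₂ h₂)).sdiff
    _ ≤ (⋃ ℓ ∈ L \ {ℓ₂}, ptsIn F V ℓ).ncard + (ptsIn F V ℓ₂ \ {P₀}).ncard + 1 := by
        gcongr; exact Set.ncard_union_le _ _
    _ ≤ ((L \ {ℓ₂}).ncard + 1) * (Nat.card F + 1) := by rw [add_assoc, hℓ₂]; nlinarith
    _ = L.ncard * (Nat.card F + 1) := by rw [Set.ncard_sdiff_singleton_add_one h₂ hL]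

end Points

section Code

variable {F V : Type*} [Field F] [AddCommGroup V] [Module F V]

lemma Module.Dual.exists_eq_smul_of_ker_le [FiniteDimensional F V] {f f' : Dual F V}
    (h : LinearMap.ker f ≤ LinearMap.ker f') : ∃ a : F, f' = a • f := by
  have hmem : f' ∈ Submodule.span F (Set.range fun _ : Unit => f) :=
    mem_span_of_iInf_ker_le_ker (by simpa using h)
  rw [Set.range_const, Submodule.mem_span_singleton] at hmem
  exact hmem.imp fun _ h => h.symm

/-- The code generated by the matrix with columns `g i`. -/
def evalCode {ι : Type*} (g : ι → V) : Dual F V →ₗ[F] ι → F :=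
  LinearMap.pi fun i => Dual.eval F V (g i)

@[simp]
lemma evalCode_apply {ι : Type*} (g : ι → V) (f : Dual F V) (i : ι) : evalCode g f i = f (g i) :=
  rfl

variable [FiniteDimensional F V] {N : ℕ} {S : Set (Projectivization F V)} {ι : Type*} {g : ι → V}

lemma HP.StrongBlock.ker_le_ker (hS : StrongBlock F V N 1 S) (hV : finrank F V = N + 1)
    (hN : N ≠ 0) (hg : ∀ P ∈ S, ∃ i, g i = P.rep) {f f' : Dual F V} (hf : f ≠ 0)
    (hsupp : ∀ i, f (g i) = 0 → f' (g i) = 0) : LinearMap.ker f ≤ LinearMap.ker f' := by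
  have hker := Dual.finrank_ker_add_one_of_ne_zero hf
  rw [← hS (LinearMap.ker f) (by omega)]
  refine iSup₂_le fun P ⟨hPS, hPf⟩ => ?_
  obtain ⟨i, hi⟩ := hg P hPS
  have hrep : f (g i) = 0 := hi ▸ hPf (Projectivization.submodule_eq P ▸
    Submodule.mem_span_singleton_self P.rep)
  rw [Projectivization.submodule_eq, Submodule.span_singleton_le_iff_mem, ← hi]
  exact hsupp i hrep

lemma HP.StrongBlock.injective_evalCode (hS : StrongBlock F V N 1 S) (hV : finrank F V = N + 1)
    (hN : N ≠ 0) (hg : ∀ P ∈ S, ∃ i, g i = P.rep) : Function.Injective (evalCode (F := F) g) := by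
  rw [← LinearMap.ker_eq_bot, Submodule.eq_bot_iff]
  intro f hf
  by_contra hf0
  let b := Module.finBasisOfFinrankEq F V hV
  obtain ⟨i, hi⟩ : ∃ i, f (b i) ≠ 0 := by
    by_contra! h
    exact hf0 (b.ext fun i => by simpa using h i)
  have : Nontrivial (Fin (N + 1)) := Fin.nontrivial_iff_two_le.2 (by omega)
  obtain ⟨j, hji⟩ := exists_ne i
  have hcoord : b.coord j ≠ 0 := fun h => by simpa using LinearMap.congr_fun h (b j)
  -- `f` vanishes on all of `S`, so the hyperplane `ker (b.coord j)` lies in `ker f`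
  have hle := hS.ker_le_ker hV hN hg hcoord fun k _ => congrFun (LinearMap.mem_ker.1 hf) k
  exact hi (hle (by simp [hji.symm]))

lemma HP.StrongBlock.isMinimalCode_range_evalCode {n : ℕ} {g : Fin n → V}
    (hS : StrongBlock F V N 1 S) (hV : finrank F V = N + 1) (hN : N ≠ 0)
    (hg : ∀ P ∈ S, ∃ i, g i = P.rep) : IsMinimalCode (LinearMap.range (evalCode (F := F) g)) := by
  rintro _ ⟨f, rfl⟩ hc _ ⟨f', rfl⟩ - hsupp
  have hf : f ≠ 0 := by
    rintro rfl
    exact hc (map_zero _)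
  obtain ⟨a, rfl⟩ := Dual.exists_eq_smul_of_ker_le <|
    hS.ker_le_ker hV hN hg hf fun i hi => not_not.1 fun h => hsupp h hi
  exact ⟨a, map_smul _ _ _⟩

theorem HP.StrongBlock.exists_isMinimalCode (hS : StrongBlock F V N 1 S) (hSfin : S.Finite)
    (hV : finrank F V = N + 1) (hN : N ≠ 0) :
    ∃ C : Submodule F (Fin S.ncard → F), finrank F C = N + 1 ∧ IsMinimalCode C := by
  have := hSfin.to_subtype
  let e : S ≃ Fin S.ncard := (Finite.equivFin S).trans (finCongr (Nat.card_coe_set_eq S))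
  let g : Fin S.ncard → V := fun i => (e.symm i).1.rep
  have hg : ∀ P ∈ S, ∃ i, g i = P.rep := fun P hP => ⟨e ⟨P, hP⟩, by simp [g]⟩
  refine ⟨LinearMap.range (evalCode g), ?_, hS.isMinimalCode_range_evalCode hV hN hg⟩
  rw [LinearMap.finrank_range_of_inj (hS.injective_evalCode hV hN hg), Subspace.dual_finrank_eq,
    hV]

end Code

/-- if there exists a higgledy-piggledy set of six lines of `PG(4,q)`,
two of which intersect, then there is a minimal linear code of dimension `5` over `F_q`
of length at most `6q+5`; i.e. `m(5,q) ≤ 6q+5`. -/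
theorem stmt_19 (F : Type*) [Field F] [Fintype F]
    (hex : ∃ L : Set (Submodule F (Fin 5 → F)),
      (∀ ℓ ∈ L, finrank F ℓ = 2) ∧ L.ncard = 6 ∧
      StrongBlock F (Fin 5 → F) 4 1 (⋃ ℓ ∈ L, ptsIn F (Fin 5 → F) ℓ) ∧
      ∃ ℓ₁ ∈ L, ∃ ℓ₂ ∈ L, ℓ₁ ≠ ℓ₂ ∧ ℓ₁ ⊓ ℓ₂ ≠ ⊥) :
    ∃ n : ℕ, n ≤ 6 * Fintype.card F + 5 ∧
      ∃ C : Submodule F (Fin n → F), finrank F C = 5 ∧ IsMinimalCode C := by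
  obtain ⟨L, hdim, hL6, hSB, ℓ₁, h₁, ℓ₂, h₂, hne, hmeet⟩ := hex
  obtain ⟨C, hC, hCmin⟩ := hSB.exists_isMinimalCode (Set.toFinite _) (by simp) (by norm_num)
  have hcard := ncard_biUnion_ptsIn_add_one_le
    (Set.finite_of_ncard_ne_zero (by omega)) hdim h₁ h₂ hne hmeet
  rw [hL6, Nat.card_eq_fintype_card] at hcard
  exact ⟨_, by omega, C, hC, hCmin⟩
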